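/- arXiv:math/0205081 — 3 statements merged into one kernel-verified Lean document; each statement's English description precedes it below -/
import Mathlib

section
/- Let V be a finite-dimensional real vector space with a nondegenerate symmetric bilinear form, J a pseudo-Hermitian almost complex structure on V, and R an algebraic curvature tensor on V. Then J∘R(x,Jx) = R(x,Jx)∘J holds for all x ∈ V if and only if R(Jx,Jy,Jz,Jw) = R(x,y,z,w) for all x,y,z,w ∈ V. -/
open Module

variable {V : Type*} [AddCommGroup V] [Module ℝ V] [FiniteDimensional ℝ V]

/-- `R` is an algebraic curvature tensor: multilinear in each slot and satisfying the
usual curvature symmetries. -/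
def IsAlgCurvTensor (R : V → V → V → V → ℝ) : Prop :=
  (∀ (a : ℝ) (x x' y z w : V), R (a • x + x') y z w = a * R x y z w + R x' y z w) ∧
  (∀ (a : ℝ) (x y y' z w : V), R x (a • y + y') z w = a * R x y z w + R x y' z w) ∧
  (∀ (a : ℝ) (x y z z' w : V), R x y (a • z + z') w = a * R x y z w + R x y z' w) ∧
  (∀ (a : ℝ) (x y z w w' : V), R x y z (a • w + w') = a * R x y z w + R x y z w') ∧
  (∀ x y z w : V, R x y z w = - R y x z w) ∧
  (∀ x y z w : V, R x y z w = R z w x y) ∧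
  (∀ x y z w : V, R x y z w + R y z x w + R z x y w = 0)

/-- `J` is a pseudo-Hermitian almost complex structure on `(V, B)`. -/
def IsPseudoHermitian (B : LinearMap.BilinForm ℝ V) (J : V →ₗ[ℝ] V) : Prop :=
  (∀ x : V, J (J x) = -x) ∧ (∀ x y : V, B (J x) (J y) = B x y)

/-!
Testing `R(x,Jx)` against the form shows that it commutes with `J` exactly when
`R(x,Jx,Jz,Jw) = R(x,Jx,z,w)` for all `z, w`. Polarizing this in `x` and substituting `y ↦ Jy`
gives `H(Jx,Jy,z,w) = -H(x,y,z,w)` for `H(x,y,z,w) = R(x,y,Jz,Jw) - R(x,y,z,w)`, i.e.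
`R(Jx,Jy,Jz,Jw) + R(x,y,Jz,Jw) = R(Jx,Jy,z,w) + R(x,y,z,w)`; adding this identity to its image
under the pair symmetry `(x,y) ↔ (z,w)` leaves `R(Jx,Jy,Jz,Jw) = R(x,y,z,w)`.
-/

theorem isLinearMap_of_map_smul_add {K M : Type*} [Ring K] [AddCommGroup M] [Module K M]
    {f : M → K} (h : ∀ (a : K) (x y : M), f (a • x + y) = a * f x + f y) : IsLinearMap K f := by
  have hzero : f 0 = 0 := by simpa using h 1 0 0
  exact ⟨fun x y => by simpa using h 1 x y, fun a x => by simpa [hzero] using h a x 0⟩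

theorem LinearMap.BilinForm.exists_apply_eq_of_separatingLeft {K M : Type*} [Field K]
    [AddCommGroup M] [Module K M] [FiniteDimensional K M] {B : LinearMap.BilinForm K M}
    (hB : B.SeparatingLeft) (φ : LinearMap.BilinForm K M) :
    ∃ A : M →ₗ[K] M, ∀ z w, B (A z) w = φ z w :=
  ⟨(B.toDual (.ofSeparatingLeft hB)).symm.toLinearMap ∘ₗ φ,
    fun z _ => B.apply_toDual_symm_apply (hB := .ofSeparatingLeft hB) (φ z) _⟩

section

variable {E : Type*} [AddCommGroup E] [Module ℝ E]

namespace IsAlgCurvTensor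

variable {R : E → E → E → E → ℝ}

theorem isLinearMap₁ (hR : IsAlgCurvTensor R) (y z w : E) : IsLinearMap ℝ (R · y z w) :=
  isLinearMap_of_map_smul_add (hR.1 · · · y z w)

theorem isLinearMap₂ (hR : IsAlgCurvTensor R) (x z w : E) : IsLinearMap ℝ (R x · z w) :=
  isLinearMap_of_map_smul_add (hR.2.1 · x · · z w)

theorem isLinearMap₃ (hR : IsAlgCurvTensor R) (x y w : E) : IsLinearMap ℝ (R x y · w) :=
  isLinearMap_of_map_smul_add (hR.2.2.1 · x y · · w)

theorem isLinearMap₄ (hR : IsAlgCurvTensor R) (x y z : E) : IsLinearMap ℝ (R x y z ·) :=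
  isLinearMap_of_map_smul_add (hR.2.2.2.1 · x y z · ·)

theorem map_add₁ (hR : IsAlgCurvTensor R) (x x' y z w : E) :
    R (x + x') y z w = R x y z w + R x' y z w :=
  (hR.isLinearMap₁ y z w).map_add x x'

theorem map_add₂ (hR : IsAlgCurvTensor R) (x y y' z w : E) :
    R x (y + y') z w = R x y z w + R x y' z w :=
  (hR.isLinearMap₂ x z w).map_add y y'

theorem map_neg₂ (hR : IsAlgCurvTensor R) (x y z w : E) : R x (-y) z w = -R x y z w :=
  (hR.isLinearMap₂ x z w).map_neg y

theorem antisymm (hR : IsAlgCurvTensor R) (x y z w : E) : R x y z w = -R y x z w :=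
  hR.2.2.2.2.1 x y z w

theorem pair_symm (hR : IsAlgCurvTensor R) (x y z w : E) : R x y z w = R z w x y :=
  hR.2.2.2.2.2.1 x y z w

def bilinForm (hR : IsAlgCurvTensor R) (x y : E) : LinearMap.BilinForm ℝ E :=
  LinearMap.mk₂ ℝ (R x y) (fun z z' w => (hR.isLinearMap₃ x y w).map_add z z')
    (fun a z w => (hR.isLinearMap₃ x y w).map_smul a z)
    (fun z w w' => (hR.isLinearMap₄ x y z).map_add w w')
    (fun a z w => (hR.isLinearMap₄ x y z).map_smul a w)

variable {J : E →ₗ[ℝ] E}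

theorem invariant_of_invariant_on_pairs (hR : IsAlgCurvTensor R) (hJ : ∀ x, J (J x) = -x)
    (h : ∀ x z w, R x (J x) (J z) (J w) = R x (J x) z w) (x y z w : E) :
    R (J x) (J y) (J z) (J w) = R x y z w := by
  have polarized : ∀ x y z w, R x (J y) (J z) (J w) - R x (J y) z w
      + (R y (J x) (J z) (J w) - R y (J x) z w) = 0 := by
    intro x y z w
    have hxy := h (x + y) z w
    simp only [map_add, hR.map_add₁, hR.map_add₂] at hxy
    linarith [h x z w, h y z w]
  have anti : ∀ x y z w, R (J x) (J y) (J z) (J w) - R (J x) (J y) z w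
      = -(R x y (J z) (J w) - R x y z w) := by
    intro x y z w
    have hyx := polarized y (J x) z w
    rw [hJ, hR.map_neg₂, hR.map_neg₂, hR.antisymm y x, hR.antisymm y x] at hyx
    linarith
  have hxy := anti x y z w
  have hzw := anti z w x y
  rw [hR.pair_symm (J z), hR.pair_symm (J z), hR.pair_symm z w (J x), hR.pair_symm z w x] at hzw
  linarith

theorem invariant_on_pairs_of_invariant (hR : IsAlgCurvTensor R) (hJ : ∀ x, J (J x) = -x)
    (h : ∀ x y z w, R (J x) (J y) (J z) (J w) = R x y z w) (x z w : E) :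
    R x (J x) (J z) (J w) = R x (J x) z w := by
  rw [← h x (J x) z w, hJ, hR.map_neg₂, hR.antisymm (J x) x, neg_neg]

end IsAlgCurvTensor

namespace IsPseudoHermitian

variable {B : LinearMap.BilinForm ℝ E} {J : E →ₗ[ℝ] E}

theorem apply_map_left (hJ : IsPseudoHermitian B J) (u w : E) : B (J u) w = -B u (J w) := by
  have h := hJ.2 u (-J w)
  rwa [map_neg, hJ.1, neg_neg, map_neg] at h

theorem commute_iff_invariant (hJ : IsPseudoHermitian B J) (hB : B.SeparatingLeft)
    {A : E →ₗ[ℝ] E} {φ : LinearMap.BilinForm ℝ E} (hA : ∀ z w, B (A z) w = φ z w) :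
    (∀ v, J (A v) = A (J v)) ↔ ∀ z w, φ (J z) (J w) = φ z w := by
  have pairing : ∀ z w, B (J (A z)) w = -φ z (J w) ∧ B (A (J z)) w = φ (J z) w :=
    fun z w => ⟨by rw [hJ.apply_map_left, hA], hA (J z) w⟩
  constructor
  · intro hcomm z w
    obtain ⟨hJA, hAJ⟩ := pairing z (J w)
    rwa [hcomm, hAJ, hJ.1, map_neg, neg_neg] at hJA
  · intro hinv v
    refine sub_eq_zero.mp (hB _ fun w => ?_)
    have h := hinv v (-J w)
    rw [map_neg, hJ.1, neg_neg, map_neg] at h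
    rw [LinearMap.map_sub₂, (pairing v w).1, (pairing v w).2, ← h]
    ring

end IsPseudoHermitian

end

theorem commutes_forall_iff_J_invariant_general
    (B : LinearMap.BilinForm ℝ V)
    (hnd : ∀ v : V, (∀ w : V, B v w = 0) → v = 0)
    (J : V →ₗ[ℝ] V) (hJ : IsPseudoHermitian B J)
    (R : V → V → V → V → ℝ) (hR : IsAlgCurvTensor R) :
    (∀ x : V, ∀ A : V →ₗ[ℝ] V, (∀ z w : V, B (A z) w = R x (J x) z w) →
        ∀ v : V, J (A v) = A (J v)) ↔
      ∀ x y z w : V, R (J x) (J y) (J z) (J w) = R x y z w := by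
  constructor
  · intro hcomm
    refine hR.invariant_of_invariant_on_pairs hJ.1 fun x => ?_
    obtain ⟨A, hA⟩ := B.exists_apply_eq_of_separatingLeft hnd (hR.bilinForm x (J x))
    exact (hJ.commute_iff_invariant hnd hA).mp (hcomm x A hA)
  · intro hinv x A hA
    exact (hJ.commute_iff_invariant hnd (φ := hR.bilinForm x (J x)) hA).mpr
      (hR.invariant_on_pairs_of_invariant hJ.1 hinv x)

/-- For an algebraic curvature tensor `R`, the curvature operator
`R(x, Jx)` commutes with `J` for every `x ∈ V` if and only if
`R(Jx, Jy, Jz, Jw) = R(x, y, z, w)` for all `x, y, z, w`. -/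
theorem commutes_forall_iff_J_invariant
    (B : LinearMap.BilinForm ℝ V)
    (hsymm : ∀ x y : V, B x y = B y x)
    (hnd : ∀ v : V, (∀ w : V, B v w = 0) → v = 0)
    (J : V →ₗ[ℝ] V) (hJ : IsPseudoHermitian B J)
    (R : V → V → V → V → ℝ) (hR : IsAlgCurvTensor R) :
    (∀ x : V, ∀ A : V →ₗ[ℝ] V, (∀ z w : V, B (A z) w = R x (J x) z w) →
        ∀ v : V, J (A v) = A (J v)) ↔
      ∀ x y z w : V, R (J x) (J y) (J z) (J w) = R x y z w :=
  commutes_forall_iff_J_invariant_general B hnd J hJ R hR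
end

section
/- Let J be a pseudo-Hermitian almost complex structure on V and let φ be a linear map of V that is either self-adjoint or skew-adjoint and satisfies J∘φ = φ∘J. Then R := R_φ satisfies the identity R(x,y,z,w) = R(Jx,Jy,z,w) + R(Jx,y,Jz,w) + R(Jx,y,z,Jw) for all x,y,z,w ∈ V. -/
/-! Being `B`-orthogonal with `J² = -1`, `J` is `B`-skew, and since it commutes with `φ`,
`(φ (J x), v) = -(φ x, J v)`. Moving every `J` off the first slot of each factor this way,
and using `J² = -1` again, writes all terms through `x, y, z, w, J z, J w`; the identity is
then a polynomial identity, for both `R_φ`. -/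

open Module

variable {V : Type*} [AddCommGroup V] [Module ℝ V] [FiniteDimensional ℝ V]

/-- `φ` is self-adjoint with respect to `B`. -/
def IsSelfAdj (B : LinearMap.BilinForm ℝ V) (φ : V →ₗ[ℝ] V) : Prop :=
  ∀ x y : V, B (φ x) y = B x (φ y)

/-- `φ` is skew-adjoint with respect to `B`. -/
def IsSkewAdj (B : LinearMap.BilinForm ℝ V) (φ : V →ₗ[ℝ] V) : Prop :=
  ∀ x y : V, B (φ x) y = - B x (φ y)

/-- The curvature tensor `R_φ` associated to a self-adjoint map `φ`. -/
def Rs (B : LinearMap.BilinForm ℝ V) (φ : V →ₗ[ℝ] V) : V → V → V → V → ℝ :=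
  fun x y z w => B (φ y) z * B (φ x) w - B (φ x) z * B (φ y) w

/-- The curvature tensor `R_φ` associated to a skew-adjoint map `φ`. -/
def Ra (B : LinearMap.BilinForm ℝ V) (φ : V →ₗ[ℝ] V) : V → V → V → V → ℝ :=
  fun x y z w =>
    B (φ y) z * B (φ x) w - B (φ x) z * B (φ y) w - 2 * B (φ x) y * B (φ z) w

section GrayIdentity

variable {W : Type*} [AddCommGroup W] [Module ℝ W] {B : LinearMap.BilinForm ℝ W}
  {J φ : W →ₗ[ℝ] W}

theorem IsPseudoHermitian.isSkewAdj (hJ : IsPseudoHermitian B J) : IsSkewAdj B J := fun x y => by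
  rw [← hJ.2 (J x) y, hJ.1, map_neg, LinearMap.neg_apply]

theorem IsPseudoHermitian.apply_map_left_of_comm (hJ : IsPseudoHermitian B J)
    (hcomm : ∀ x : W, J (φ x) = φ (J x)) (x y : W) : B (φ (J x)) y = -B (φ x) (J y) := by
  rw [← hcomm, hJ.isSkewAdj]

theorem Rs_gray_identity (hJ : IsPseudoHermitian B J) (hcomm : ∀ x : W, J (φ x) = φ (J x))
    (x y z w : W) :
    Rs B φ x y z w =
      Rs B φ (J x) (J y) z w + Rs B φ (J x) y (J z) w + Rs B φ (J x) y z (J w) := by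
  simp only [Rs, hJ.apply_map_left_of_comm hcomm, hJ.1, map_neg, mul_neg, neg_mul, neg_neg]
  ring

theorem Ra_gray_identity (hJ : IsPseudoHermitian B J) (hcomm : ∀ x : W, J (φ x) = φ (J x))
    (x y z w : W) :
    Ra B φ x y z w =
      Ra B φ (J x) (J y) z w + Ra B φ (J x) y (J z) w + Ra B φ (J x) y z (J w) := by
  simp only [Ra, hJ.apply_map_left_of_comm hcomm, hJ.1, map_neg, mul_neg, neg_mul, neg_neg]
  ring

end GrayIdentity

theorem Rphi_reduced_gray_identity_general
    (B : LinearMap.BilinForm ℝ V)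
    (J : V →ₗ[ℝ] V) (hJ : IsPseudoHermitian B J)
    (φ : V →ₗ[ℝ] V) (R : V → V → V → V → ℝ)
    (hR : (IsSelfAdj B φ ∧ R = Rs B φ) ∨ (IsSkewAdj B φ ∧ R = Ra B φ))
    (hcomm : ∀ x : V, J (φ x) = φ (J x)) :
    ∀ x y z w : V,
      R x y z w = R (J x) (J y) z w + R (J x) y (J z) w + R (J x) y z (J w) := by
  rcases hR with ⟨-, rfl⟩ | ⟨-, rfl⟩
  · exact Rs_gray_identity hJ hcomm
  · exact Ra_gray_identity hJ hcomm

/-- If `φ` is self-adjoint or skew-adjoint and commutes with `J`, then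
`R := R_φ` satisfies `R(x,y,z,w) = R(Jx,Jy,z,w) + R(Jx,y,Jz,w) + R(Jx,y,z,Jw)`. -/
theorem Rphi_reduced_gray_identity
    (B : LinearMap.BilinForm ℝ V)
    (hsymm : ∀ x y : V, B x y = B y x)
    (hnd : ∀ v : V, (∀ w : V, B v w = 0) → v = 0)
    (J : V →ₗ[ℝ] V) (hJ : IsPseudoHermitian B J)
    (φ : V →ₗ[ℝ] V) (R : V → V → V → V → ℝ)
    (hR : (IsSelfAdj B φ ∧ R = Rs B φ) ∨ (IsSkewAdj B φ ∧ R = Ra B φ))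
    (hcomm : ∀ x : V, J (φ x) = φ (J x)) :
    ∀ x y z w : V,
      R x y z w = R (J x) (J y) z w + R (J x) y (J z) w + R (J x) y z (J w) :=
  Rphi_reduced_gray_identity_general B J hJ φ R hR hcomm
end

section
/- Let J be a pseudo-Hermitian almost complex structure on V, let φ be an admissible linear map of V, and let c ∈ ℝ. Then cR_φ is an almost complex Jordan IP algebraic curvature tensor. -/
open Module

variable {V : Type*} [AddCommGroup V] [Module ℝ V] [FiniteDimensional ℝ V]

/-- `π` is a nondegenerate complex line: a `2`-dimensional `J`-invariant subspace
on which `B` is nondegenerate. -/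
def IsNondegComplexLine (B : LinearMap.BilinForm ℝ V) (J : V →ₗ[ℝ] V)
    (π : Submodule ℝ V) : Prop :=
  finrank ℝ π = 2 ∧ (∀ v ∈ π, J v ∈ π) ∧
  (∀ v ∈ π, (∀ w ∈ π, B v w = 0) → v = 0)

/-- `R` is almost complex: for every `x` such that `span {x, Jx}` is a nondegenerate
complex line, the curvature operator `R(x, Jx)` (defined by
`B (A z) w = R x (Jx) z w`) commutes with `J`. -/
def IsAlmostComplex (B : LinearMap.BilinForm ℝ V) (J : V →ₗ[ℝ] V)
    (R : V → V → V → V → ℝ) : Prop :=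
  ∀ x : V, IsNondegComplexLine B J (Submodule.span ℝ {x, J x}) →
    ∀ A : V →ₗ[ℝ] V, (∀ z w : V, B (A z) w = R x (J x) z w) →
      ∀ v : V, J (A v) = A (J v)

/-- `R` is almost complex Jordan IP: the Jordan normal form of the skew-symmetric
curvature operator is constant on the nondegenerate complex lines, i.e. for all
`x, y` with `|B x x| = 1` and `|B y y| = 1` the operators `R(x, Jx)` and `R(y, Jy)`
are conjugate by an invertible linear map. -/
def IsComplexJordanIP (B : LinearMap.BilinForm ℝ V) (J : V →ₗ[ℝ] V)
    (R : V → V → V → V → ℝ) : Prop :=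
  ∀ x y : V, |B x x| = 1 → |B y y| = 1 →
    ∀ Ax Ay : V →ₗ[ℝ] V,
      (∀ z w : V, B (Ax z) w = R x (J x) z w) →
      (∀ z w : V, B (Ay z) w = R y (J y) z w) →
      ∃ ψ : V ≃ₗ[ℝ] V, ∀ v : V, Ax v = ψ (Ay (ψ.symm v))

/-- `φ` is admissible: (i) `φ` is self-adjoint and commutes or anticommutes with `J`,
or `φ` is skew-adjoint and anticommutes with `J`; (ii) `φ² = Id`, `φ² = -Id`, or
`φ² = 0` with `ker φ = range φ`. -/
def IsAdmissible (B : LinearMap.BilinForm ℝ V) (J : V →ₗ[ℝ] V)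
    (φ : V →ₗ[ℝ] V) : Prop :=
  ((IsSelfAdj B φ ∧ ((∀ x : V, φ (J x) = J (φ x)) ∨ (∀ x : V, φ (J x) = - J (φ x)))) ∨
    (IsSkewAdj B φ ∧ (∀ x : V, J (φ x) = - φ (J x)))) ∧
  ((∀ x : V, φ (φ x) = x) ∨ (∀ x : V, φ (φ x) = -x) ∨
    ((∀ x : V, φ (φ x) = 0) ∧ LinearMap.ker φ = LinearMap.range φ))

/-!
The curvature operator of `c R_φ` at `(x, Jx)` is `c (u ∧ v)`, where `u = φ x`, `v = φ (J x)` and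
`(u ∧ v) z = B(v, z) u - B(u, z) v` (for skew-adjoint `φ` the extra term of `R_φ` vanishes at
`(x, Jx)`). Admissibility gives `B(φ a, φ b) = κ B(a, b)` with `κ = ±1` if `φ² = ±1` and `κ = 0`
if `φ² = 0`, so `u ⊥ v` and `B(u, u) = B(v, v) = κ B(x, x)`. If `κ ≠ 0`, `u ∧ v` kills the
orthogonal complement of `span {u, v}` and maps `u ↦ -e v`, `v ↦ e u` with `e = κ B(x, x) = ±1`;
replacing `v` by `-v` if necessary makes `e` independent of `x`. If `κ = 0`, `ker φ = range φ`
makes `u, v` independent, and vectors `p, q` with `B(v, p) = 1 = -B(u, q)` exhibit two Jordan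
blocks `p ↦ u ↦ 0`, `q ↦ v ↦ 0`. Either way all these operators are conjugate, and they commute
with `J` because `Jφ = ±φJ`.
-/

open Submodule

section

variable {E : Type*} [AddCommGroup E] [Module ℝ E]

section Biorthogonal

variable {ι : Type*} [DecidableEq ι] {f : ι → E} {ℓ : ι → Dual ℝ E}

theorem LinearIndependent.exists_biorthogonal (hf : LinearIndependent ℝ f) :
    ∃ ℓ : ι → Dual ℝ E, ∀ i j, ℓ i (f j) = if i = j then 1 else 0 := by
  choose ℓ hℓ using fun i => LinearMap.exists_extend ((Basis.span hf).coord i)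
  refine ⟨ℓ, fun i j => ?_⟩
  have : f j = (span ℝ (Set.range f)).subtype (Basis.span hf j) := by simp [Basis.span_apply]
  rw [this, ← LinearMap.comp_apply, hℓ, Basis.coord_apply, Basis.repr_self, Finsupp.single_apply]
  simp [eq_comm]

variable [Fintype ι]

theorem apply_sum_of_biorthogonal (h : ∀ i j, ℓ i (f j) = if i = j then 1 else 0)
    (a : ι → ℝ) (i : ι) : ℓ i (∑ j, a j • f j) = a i := by
  simp [h]

theorem linearIndependent_of_biorthogonal (h : ∀ i j, ℓ i (f j) = if i = j then 1 else 0) :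
    LinearIndependent ℝ f := by
  refine Fintype.linearIndependent_iff.mpr fun a ha i => ?_
  simpa [ha] using (apply_sum_of_biorthogonal h a i).symm

theorem isCompl_span_iInf_ker_of_biorthogonal
    (h : ∀ i j, ℓ i (f j) = if i = j then 1 else 0) :
    IsCompl (span ℝ (Set.range f)) (⨅ i, LinearMap.ker (ℓ i)) := by
  constructor
  · rw [disjoint_def]
    intro z hz hz'
    obtain ⟨a, rfl⟩ := mem_span_range_iff_exists_fun ℝ |>.mp hz
    simp only [mem_iInf, LinearMap.mem_ker, apply_sum_of_biorthogonal h] at hz'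
    simp [hz']
  · rw [codisjoint_iff, eq_top_iff]
    intro z _
    refine mem_sup.mpr ⟨∑ j, ℓ j z • f j, sum_mem fun j _ => smul_mem _ _ (subset_span ⟨j, rfl⟩),
      z - ∑ j, ℓ j z • f j, ?_, add_sub_cancel _ _⟩
    simp [apply_sum_of_biorthogonal h]

end Biorthogonal

section Frame

variable {ι : Type*} [Fintype ι] [DecidableEq ι]

/-- The common kernel of the biorthogonal family `ℓ` complements `span f`, so this says that `A`
is conjugate to `M ⊕ 0`. -/
def HasMatrixOnFrame (A : Module.End ℝ E) (M : Matrix ι ι ℝ) : Prop :=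
  ∃ (f : ι → E) (ℓ : ι → Dual ℝ E), (∀ i j, ℓ i (f j) = if i = j then 1 else 0) ∧
    (∀ z, (∀ i, ℓ i z = 0) → A z = 0) ∧ ∀ i, A (f i) = ∑ j, M i j • f j

variable [FiniteDimensional ℝ E] {A A' : Module.End ℝ E} {M : Matrix ι ι ℝ}

theorem HasMatrixOnFrame.exists_basis (hA : HasMatrixOnFrame A M) :
    ∃ b : Basis (ι ⊕ Fin (finrank ℝ E - Fintype.card ι)) ℝ E,
      (∀ i, A (b (.inl i)) = ∑ j, M i j • b (.inl j)) ∧ ∀ k, A (b (.inr k)) = 0 := by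
  obtain ⟨f, ℓ, hℓ, hker, hf⟩ := hA
  have hli := linearIndependent_of_biorthogonal hℓ
  have hcompl := isCompl_span_iInf_ker_of_biorthogonal hℓ
  have hrank : finrank ℝ ↥(⨅ i, LinearMap.ker (ℓ i)) = finrank ℝ E - Fintype.card ι := by
    have := finrank_add_eq_of_isCompl hcompl
    rw [finrank_span_eq_card hli] at this
    omega
  let b := ((Basis.span hli).prod ((finBasis ℝ _).reindex (finCongr hrank))).map
    (prodEquivOfIsCompl _ _ hcompl)
  have hb_inl : ∀ i, b (.inl i) = f i := by simp [b, Basis.span_apply]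
  refine ⟨b, fun i => by simp only [hb_inl, hf], fun k => hker _ fun i => ?_⟩
  have : b (.inr k) ∈ ⨅ i, LinearMap.ker (ℓ i) := by simp [b]
  simpa using (mem_iInf _).mp this i

theorem HasMatrixOnFrame.exists_conj (hA : HasMatrixOnFrame A M)
    (hA' : HasMatrixOnFrame A' M) : ∃ ψ : E ≃ₗ[ℝ] E, A = ψ.conj A' := by
  obtain ⟨b, hbl, hbr⟩ := hA.exists_basis
  obtain ⟨b', hbl', hbr'⟩ := hA'.exists_basis
  refine ⟨b'.equiv b (Equiv.refl _), b.ext fun i => ?_⟩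
  rcases i with i | k
  · simp [Basis.equiv_symm, hbl, hbl']
  · simp [Basis.equiv_symm, hbr, hbr']

end Frame

section Wedge

variable (B : LinearMap.BilinForm ℝ E)

def wedgeOp (u v : E) : Module.End ℝ E := (B v).smulRight u - (B u).smulRight v

variable {B}

@[simp]
theorem wedgeOp_apply (u v z : E) : wedgeOp B u v z = B v z • u - B u z • v := rfl

theorem commute_wedgeOp {J : Module.End ℝ E} {u v : E} {τ : ℝ}
    (hJ : ∀ a b, B (J a) b = -B a (J b)) (hu : J u = τ • v) (hv : J v = -τ • u) :
    Commute J (wedgeOp B u v) := by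
  refine LinearMap.ext fun z => ?_
  have hvJ : B v (J z) = τ * B u z := by rw [← neg_eq_iff_eq_neg.mpr (hJ v z), hv]; simp
  have huJ : B u (J z) = -(τ * B v z) := by rw [← neg_eq_iff_eq_neg.mpr (hJ u z), hu]; simp
  simp only [Module.End.mul_apply, wedgeOp_apply, map_sub, map_smul, hu, hv, hvJ, huJ]
  module

theorem hasMatrixOnFrame_wedgeOp_of_anisotropic (hsymm : ∀ x y, B x y = B y x) {u v : E}
    {e μ : ℝ} (he : e ≠ 0) (hμ : μ * μ = e * e) (huu : B u u = e) (hvv : B v v = e)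
    (huv : B u v = 0) : HasMatrixOnFrame (wedgeOp B u v) !![0, -μ; μ, 0] := by
  have hμ0 : μ ≠ 0 := by rintro rfl; exact he (mul_self_eq_zero.mp (by linarith))
  have hvu : B v u = 0 := by rw [hsymm, huv]
  -- `μ / e = ±1`; rescaling `v` by it replaces `e` by `μ` in the matrix
  refine ⟨![u, (μ / e) • v], ![e⁻¹ • B u, μ⁻¹ • B v], fun i j => ?_, fun z hz => ?_, fun i => ?_⟩
  · fin_cases i <;> fin_cases j <;> simp [huu, hvv, huv, hvu, he]
    field_simp
  · obtain ⟨hu, hv⟩ : B u z = 0 ∧ B v z = 0 := by simpa [he, hμ0] using And.intro (hz 0) (hz 1)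
    simp [hu, hv]
  · fin_cases i <;> simp [Fin.sum_univ_two, huu, hvv, huv, hvu, smul_smul]
    · match_scalars; field_simp; linarith
    · field_simp

theorem hasMatrixOnFrame_wedgeOp_of_isotropic [FiniteDimensional ℝ E]
    (hsymm : ∀ x y, B x y = B y x) (hnd : B.Nondegenerate) {u v : E}
    (hli : LinearIndependent ℝ ![u, v]) (huu : B u u = 0) (hvv : B v v = 0) (huv : B u v = 0) :
    HasMatrixOnFrame (wedgeOp B u v) !![0, 0, 1, 0; 0, 0, 0, 1; 0, 0, 0, 0; 0, 0, 0, 0] := by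
  obtain ⟨μ, hμ⟩ := hli.exists_biorthogonal
  obtain ⟨hμ00, hμ01, hμ10, hμ11⟩ : μ 0 u = 1 ∧ μ 0 v = 0 ∧ μ 1 u = 0 ∧ μ 1 v = 1 :=
    ⟨by simpa using hμ 0 0, by simpa using hμ 0 1, by simpa using hμ 1 0, by simpa using hμ 1 1⟩
  set p := (B.toDual hnd).symm (μ 1)
  set q := -(B.toDual hnd).symm (μ 0)
  have hvu : B v u = 0 := by rw [hsymm, huv]
  have hp : ∀ z, B z p = μ 1 z := fun z => by
    rw [hsymm, LinearMap.BilinForm.apply_toDual_symm_apply]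
  have hq : ∀ z, B z q = -μ 0 z := fun z => by
    rw [hsymm, map_neg, LinearMap.neg_apply, LinearMap.BilinForm.apply_toDual_symm_apply]
  -- the last two functionals are `μ 0`, `μ 1` corrected to vanish on `p` and `q`
  refine ⟨![p, q, u, v], ![B v, -B u, μ 0 - μ 0 p • B v + μ 0 q • B u,
    μ 1 - μ 1 p • B v + μ 1 q • B u], fun i j => ?_, fun z hz => ?_, fun i => ?_⟩
  · fin_cases i <;> fin_cases j <;> simp [hp, hq, huu, hvv, huv, hvu, hμ00, hμ01, hμ10, hμ11]
  · obtain ⟨hv, hu⟩ : B v z = 0 ∧ B u z = 0 := by simpa using And.intro (hz 0) (hz 1)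
    simp [hu, hv]
  · fin_cases i <;> simp [Fin.sum_univ_four, hp, hq, huu, hvv, huv, hvu, hμ00, hμ01, hμ10, hμ11]

end Wedge

section Curvature

variable {B : LinearMap.BilinForm ℝ E} {J φ : E →ₗ[ℝ] E}

theorem IsAlgCurvTensor.const_mul {R : E → E → E → E → ℝ} (hR : IsAlgCurvTensor R) (c : ℝ) :
    IsAlgCurvTensor (fun x y z w => c * R x y z w) := by
  obtain ⟨h1, h2, h3, h4, h5, h6, h7⟩ := hR
  exact ⟨fun a x x' y z w => by linear_combination c * h1 a x x' y z w,
    fun a x y y' z w => by linear_combination c * h2 a x y y' z w,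
    fun a x y z z' w => by linear_combination c * h3 a x y z z' w,
    fun a x y z w w' => by linear_combination c * h4 a x y z w w',
    fun x y z w => by linear_combination c * h5 x y z w,
    fun x y z w => by linear_combination c * h6 x y z w,
    fun x y z w => by linear_combination c * h7 x y z w⟩

theorem isAlgCurvTensor_Rs (hsymm : ∀ x y, B x y = B y x) (hφ : IsSelfAdj B φ) :
    IsAlgCurvTensor (Rs B φ) := by
  have key : ∀ a b, B (φ a) b = B (φ b) a := fun a b => by rw [hφ, hsymm]
  refine ⟨fun a x x' y z w => ?_, fun a x y y' z w => ?_, fun a x y z z' w => ?_,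
    fun a x y z w w' => ?_, fun x y z w => ?_, fun x y z w => ?_, fun x y z w => ?_⟩ <;>
    simp only [Rs, map_add, map_smul, LinearMap.add_apply, LinearMap.smul_apply, smul_eq_mul]
  any_goals ring1
  · rw [key w x, key z y, key z x, key w y]; ring
  · rw [key z x, key y x, key z y]; ring

theorem isAlgCurvTensor_Ra (hsymm : ∀ x y, B x y = B y x) (hφ : IsSkewAdj B φ) :
    IsAlgCurvTensor (Ra B φ) := by
  have key : ∀ a b, B (φ a) b = -B (φ b) a := fun a b => by rw [hφ, hsymm]
  refine ⟨fun a x x' y z w => ?_, fun a x y y' z w => ?_, fun a x y z z' w => ?_,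
    fun a x y z w w' => ?_, fun x y z w => ?_, fun x y z w => ?_, fun x y z w => ?_⟩ <;>
    simp only [Ra, map_add, map_smul, LinearMap.add_apply, LinearMap.smul_apply, smul_eq_mul]
  any_goals ring1
  · rw [key y x]; ring
  · rw [key w x, key z y, key z x, key w y]; ring
  · rw [key z x, key y x, key z y]; ring

theorem IsPseudoHermitian.apply_J_left (hJ : IsPseudoHermitian B J) (a b : E) :
    B (J a) b = -B a (J b) := by
  rw [← hJ.2 a (J b), hJ.1, map_neg, neg_neg]

theorem IsPseudoHermitian.apply_self_J (hJ : IsPseudoHermitian B J)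
    (hsymm : ∀ x y, B x y = B y x) (x : E) : B x (J x) = 0 := by
  linarith [hJ.apply_J_left x x, hsymm (J x) x]

theorem exists_adjoint_sign (hφ : IsSelfAdj B φ ∨ IsSkewAdj B φ) :
    ∃ η : ℝ, η * η = 1 ∧ ∀ a b, B (φ a) b = η * B a (φ b) := by
  rcases hφ with hφ | hφ
  · exact ⟨1, by norm_num, fun a b => by rw [hφ, one_mul]⟩
  · exact ⟨-1, by norm_num, fun a b => by rw [hφ, neg_one_mul]⟩

theorem IsAdmissible.exists_sign_comm (hadm : IsAdmissible B J φ) :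
    ∃ τ : ℝ, τ * τ = 1 ∧ ∀ x, φ (J x) = τ • J (φ x) := by
  rcases hadm.1 with ⟨_, hc | hc⟩ | ⟨_, hc⟩
  · exact ⟨1, by norm_num, fun x => by rw [hc, one_smul]⟩
  · exact ⟨-1, by norm_num, fun x => by rw [hc, neg_one_smul]⟩
  · exact ⟨-1, by norm_num, fun x => by rw [hc, neg_one_smul, neg_neg]⟩

theorem IsSkewAdj.apply_J_self (hsymm : ∀ x y, B x y = B y x) (hJ : IsPseudoHermitian B J)
    (hadm : IsAdmissible B J φ) (hφ : IsSkewAdj B φ) (x : E) : B (φ x) (J x) = 0 := by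
  rcases hadm.1 with ⟨hφ', _⟩ | ⟨_, hc⟩
  · linarith [hφ x (J x), hφ' x (J x)]
  · have := hJ.apply_J_left x (φ x)
    rw [hc, map_neg, hsymm (J x)] at this
    linarith [hφ x (J x), hsymm x (φ (J x))]

theorem commute_J_wedgeOp (hJ : IsPseudoHermitian B J) {τ : ℝ} (hτ : τ * τ = 1)
    (hφJ : ∀ x, φ (J x) = τ • J (φ x)) (x : E) : Commute J (wedgeOp B (φ x) (φ (J x))) := by
  refine commute_wedgeOp (τ := τ) hJ.apply_J_left ?_ ?_
  · rw [hφJ, smul_smul, hτ, one_smul]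
  · rw [hφJ, map_smul, hJ.1, smul_neg, neg_smul]

theorem eq_smul_wedgeOp (hnd : ∀ v : E, (∀ w, B v w = 0) → v = 0) {A : Module.End ℝ E}
    {c : ℝ} {x y : E} (hA : ∀ z w, B (A z) w = c * Rs B φ x y z w) :
    A = c • wedgeOp B (φ x) (φ y) :=
  LinearMap.ext fun z => sub_eq_zero.mp <| hnd _ fun w => by
    simp [hA, Rs]

theorem exists_conj_wedgeOp_of_anisotropic [FiniteDimensional ℝ E]
    (hsymm : ∀ x y, B x y = B y x) (hJ : IsPseudoHermitian B J) {κ : ℝ} (hκ : κ * κ = 1)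
    (hgram : ∀ a b, B (φ a) (φ b) = κ * B a b) {x y : E} (hx : |B x x| = 1) (hy : |B y y| = 1) :
    ∃ ψ : E ≃ₗ[ℝ] E, wedgeOp B (φ x) (φ (J x)) = ψ.conj (wedgeOp B (φ y) (φ (J y))) := by
  have hsq : ∀ z : E, |B z z| = 1 → B z z * B z z = 1 := fun z hz => by
    rw [← abs_mul_abs_self, hz, one_mul]
  have hframe : ∀ z : E, |B z z| = 1 → HasMatrixOnFrame (wedgeOp B (φ z) (φ (J z)))
      !![0, -(κ * B x x); κ * B x x, 0] := fun z hz =>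
    hasMatrixOnFrame_wedgeOp_of_anisotropic hsymm
      (mul_ne_zero (left_ne_zero_of_mul_eq_one hκ) (left_ne_zero_of_mul_eq_one (hsq z hz)))
      (by linear_combination (κ * κ) * (hsq x hx - hsq z hz)) (hgram z z)
      (by rw [hgram, hJ.2]) (by rw [hgram, hJ.apply_self_J hsymm, mul_zero])
  exact (hframe x hx).exists_conj (hframe y hy)

theorem linearIndependent_pair_of_ker_le_range (hsymm : ∀ x y, B x y = B y x)
    (hJ : IsPseudoHermitian B J) (hgram : ∀ a b, B (φ a) (φ b) = 0)
    (hker : LinearMap.ker φ ≤ LinearMap.range φ) {x : E} (hx : B x x ≠ 0) :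
    LinearIndependent ℝ ![φ x, φ (J x)] := by
  refine LinearIndependent.pair_iff.mpr fun s t hst => ?_
  obtain ⟨r, hr⟩ := hker (show s • x + t • J x ∈ LinearMap.ker φ by simpa using hst)
  have h0 : B (s • x + t • J x) (s • x + t • J x) = 0 := by rw [← hr, hgram]
  have h1 : (s * s + t * t) * B x x = 0 := by
    simp only [map_add, map_smul, LinearMap.add_apply, LinearMap.smul_apply, smul_eq_mul, hJ.2,
      hJ.apply_self_J hsymm, hsymm (J x) x] at h0
    linear_combination h0
  have h2 := (mul_eq_zero.mp h1).resolve_right hx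
  constructor <;> nlinarith [mul_self_nonneg s, mul_self_nonneg t]

theorem exists_conj_wedgeOp_of_isotropic [FiniteDimensional ℝ E]
    (hsymm : ∀ x y, B x y = B y x) (hnd : B.Nondegenerate) (hJ : IsPseudoHermitian B J)
    (hgram : ∀ a b, B (φ a) (φ b) = 0) (hker : LinearMap.ker φ ≤ LinearMap.range φ) {x y : E}
    (hx : B x x ≠ 0) (hy : B y y ≠ 0) :
    ∃ ψ : E ≃ₗ[ℝ] E, wedgeOp B (φ x) (φ (J x)) = ψ.conj (wedgeOp B (φ y) (φ (J y))) := by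
  have hframe : ∀ z : E, B z z ≠ 0 → HasMatrixOnFrame (wedgeOp B (φ z) (φ (J z)))
      !![0, 0, 1, 0; 0, 0, 0, 1; 0, 0, 0, 0; 0, 0, 0, 0] := fun z hz =>
    hasMatrixOnFrame_wedgeOp_of_isotropic hsymm hnd
      (linearIndependent_pair_of_ker_le_range hsymm hJ hgram hker hz) (hgram _ _) (hgram _ _)
      (hgram _ _)
  exact (hframe x hx).exists_conj (hframe y hy)

theorem IsAdmissible.exists_conj_wedgeOp [FiniteDimensional ℝ E]
    (hsymm : ∀ x y, B x y = B y x) (hnd : B.Nondegenerate) (hJ : IsPseudoHermitian B J)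
    (hadm : IsAdmissible B J φ) (hφ : IsSelfAdj B φ ∨ IsSkewAdj B φ) {x y : E}
    (hx : |B x x| = 1) (hy : |B y y| = 1) :
    ∃ ψ : E ≃ₗ[ℝ] E, wedgeOp B (φ x) (φ (J x)) = ψ.conj (wedgeOp B (φ y) (φ (J y))) := by
  obtain ⟨η, hη, hφη⟩ := exists_adjoint_sign hφ
  rcases hadm.2 with h | h | ⟨h, hker⟩
  · exact exists_conj_wedgeOp_of_anisotropic hsymm hJ hη (fun a b => by rw [hφη, h]) hx hy
  · exact exists_conj_wedgeOp_of_anisotropic hsymm hJ (κ := -η) (by linarith)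
      (fun a b => by rw [hφη, h, map_neg]; ring) hx hy
  · have hne : ∀ z : E, |B z z| = 1 → B z z ≠ 0 := fun z hz h => by simp [h] at hz
    exact exists_conj_wedgeOp_of_isotropic hsymm hnd hJ
      (fun a b => by rw [hφη, h, map_zero, mul_zero]) hker.le (hne x hx) (hne y hy)

end Curvature

end

/-- If `φ` is admissible, then `c • R_φ` is an almost complex Jordan IP
algebraic curvature tensor. -/
theorem admissible_jordanIP
    (B : LinearMap.BilinForm ℝ V)
    (hsymm : ∀ x y : V, B x y = B y x)
    (hnd : ∀ v : V, (∀ w : V, B v w = 0) → v = 0)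
    (J : V →ₗ[ℝ] V) (hJ : IsPseudoHermitian B J)
    (φ : V →ₗ[ℝ] V) (hadm : IsAdmissible B J φ)
    (R : V → V → V → V → ℝ)
    (hR : (IsSelfAdj B φ ∧ R = Rs B φ) ∨ (IsSkewAdj B φ ∧ R = Ra B φ))
    (c : ℝ) :
    IsAlgCurvTensor (fun x y z w => c * R x y z w) ∧
      IsAlmostComplex B J (fun x y z w => c * R x y z w) ∧
      IsComplexJordanIP B J (fun x y z w => c * R x y z w) := by
  have hBnd : B.Nondegenerate := ⟨hnd, fun y hy => hnd y fun x => (hsymm y x).trans (hy x)⟩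
  have hRJ : ∀ x, R x (J x) = Rs B φ x (J x) := by
    rcases hR with ⟨_, rfl⟩ | ⟨hskew, rfl⟩
    · exact fun x => rfl
    · intro x
      funext z w
      simp [Ra, Rs, hskew.apply_J_self hsymm hJ hadm x]
  have hop : ∀ x (A : V →ₗ[ℝ] V), (∀ z w, B (A z) w = c * R x (J x) z w) →
      A = c • wedgeOp B (φ x) (φ (J x)) := fun x A hA =>
    eq_smul_wedgeOp hnd (by simpa only [hRJ] using hA)
  refine ⟨?_, fun x _ A hA v => ?_, fun x y hx hy Ax Ay hAx hAy => ?_⟩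
  · rcases hR with ⟨hself, rfl⟩ | ⟨hskew, rfl⟩
    exacts [(isAlgCurvTensor_Rs hsymm hself).const_mul c,
      (isAlgCurvTensor_Ra hsymm hskew).const_mul c]
  · obtain ⟨τ, hτ, hφJ⟩ := hadm.exists_sign_comm
    rw [hop x A hA, LinearMap.smul_apply, LinearMap.smul_apply, map_smul]
    exact congr_arg (c • ·) (LinearMap.congr_fun (commute_J_wedgeOp hJ hτ hφJ x).eq v)
  · obtain ⟨ψ, hψ⟩ := hadm.exists_conj_wedgeOp hsymm hBnd hJ (hR.imp And.left And.left) hx hy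
    refine ⟨ψ, fun v => ?_⟩
    rw [hop x Ax hAx, hop y Ay hAy, hψ]
    simp
end
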